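/- Möbius matrix-vector multiplication is compatible with scalar multiplication: for m ∈ R, a matrix N, and p in the open unit ball with Np ≠ 0 and m ≠ 0, (mN) ⊗ p = m ⊗ (N ⊗ p), where m ⊗ q is Möbius scalar multiplication. -/

import Mathlib

open Real
open scoped RealInnerProductSpace Classical
noncomputable section

/-- Inverse hyperbolic cosine. -/
noncomputable def arcosh (x : ℝ) : ℝ := Real.log (x + Real.sqrt (x ^ 2 - 1))

/-- Inverse hyperbolic tangent. -/
noncomputable def artanh (x : ℝ) : ℝ := Real.log ((1 + x) / (1 - x)) / 2

/-- Möbius addition on the Poincaré ball. -/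
noncomputable def mobiusAdd {n : ℕ} (u v : EuclideanSpace ℝ (Fin n)) :
    EuclideanSpace ℝ (Fin n) :=
  (1 / (1 + 2 * ⟪u, v⟫ + ‖u‖ ^ 2 * ‖v‖ ^ 2)) •
    ((1 + 2 * ⟪u, v⟫ + ‖v‖ ^ 2) • u + (1 - ‖u‖ ^ 2) • v)

/-- Möbius scalar multiplication on the Poincaré ball. -/
noncomputable def mobiusSmul {n : ℕ} (k : ℝ) (p : EuclideanSpace ℝ (Fin n)) :
    EuclideanSpace ℝ (Fin n) :=
  if p = 0 then 0 else (Real.tanh (k * _root_.artanh ‖p‖) / ‖p‖) • p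

/-- Exponential map at the origin of the Poincaré ball. -/
noncomputable def expZero {n : ℕ} (w : EuclideanSpace ℝ (Fin n)) :
    EuclideanSpace ℝ (Fin n) :=
  if w = 0 then 0 else (Real.tanh ‖w‖ / ‖w‖) • w

/-- Logarithmic map at the origin of the Poincaré ball. -/
noncomputable def logZero {n : ℕ} (u : EuclideanSpace ℝ (Fin n)) :
    EuclideanSpace ℝ (Fin n) :=
  if u = 0 then 0 else (_root_.artanh ‖u‖ / ‖u‖) • u

/-- View a plain vector as a point of Euclidean space. -/
def toE {m : ℕ} (x : Fin m → ℝ) : EuclideanSpace ℝ (Fin m) :=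
  (WithLp.equiv 2 (Fin m → ℝ)).symm x

/-- View a point of Euclidean space as a plain vector. -/
def fromE {m : ℕ} (x : EuclideanSpace ℝ (Fin m)) : Fin m → ℝ :=
  WithLp.equiv 2 (Fin m → ℝ) x

/-- Möbius matrix-vector multiplication. -/
noncomputable def mobiusMat {m n : ℕ} (M : Matrix (Fin m) (Fin n) ℝ)
    (p : EuclideanSpace ℝ (Fin n)) : EuclideanSpace ℝ (Fin m) :=
  if toE (M.mulVec (fromE p)) = 0 then 0
  else (Real.tanh ((‖toE (M.mulVec (fromE p))‖ / ‖p‖) * _root_.artanh ‖p‖) /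
      ‖toE (M.mulVec (fromE p))‖) • toE (M.mulVec (fromE p))

/-- Poincaré distance on the open unit ball. -/
noncomputable def poincareDist {n : ℕ} (u v : EuclideanSpace ℝ (Fin n)) : ℝ :=
  2 * _root_.artanh ‖mobiusAdd (-u) v‖

/-!
Write `N p = ‖N p‖ u` with `u` a unit vector and put `t = (‖N p‖ / ‖p‖) artanh ‖p‖`, so that
`N ⊗ p = tanh t • u`. Replacing `N` by `m N` replaces `t` by `|m| t` and `u` by `sign m • u`, and
since `tanh` is odd this is the point `tanh (m t) • u`. On the other side `artanh ∘ tanh = id`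
gives `m ⊗ (tanh t • u) = tanh (m t) • u` as well.
-/

open Matrix

theorem abs_tanh (x : ℝ) : |tanh x| = tanh |x| := by
  rw [tanh_eq_sinh_div_cosh, tanh_eq_sinh_div_cosh, abs_div, abs_sinh, cosh_abs,
    abs_of_pos (cosh_pos x)]

theorem tanh_abs_mul_mul_div_abs (a b : ℝ) : tanh (|a| * b) * (a / |a|) = tanh (a * b) := by
  rcases lt_trichotomy a 0 with ha | rfl | ha
  · rw [abs_of_neg ha, neg_mul, tanh_neg, div_neg, div_self ha.ne, mul_neg, mul_one, neg_neg]
  · simp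
  · rw [abs_of_pos ha, div_self ha.ne', mul_one]

theorem artanh_eq_real_artanh {x : ℝ} (hx : x ∈ Set.Icc (-1) 1) :
    _root_.artanh x = Real.artanh x := by
  rw [Real.artanh_eq_half_log hx, _root_.artanh]
  ring

theorem artanh_tanh_abs (t : ℝ) : _root_.artanh (tanh |t|) = |t| := by
  rw [artanh_eq_real_artanh ⟨(neg_one_lt_tanh _).le, (tanh_lt_one _).le⟩, Real.artanh_tanh]

theorem mobiusSmul_tanh_smul {n : ℕ} (m t : ℝ) {u : EuclideanSpace ℝ (Fin n)} (hu : ‖u‖ = 1) :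
    mobiusSmul m (tanh t • u) = tanh (m * t) • u := by
  rcases eq_or_ne t 0 with rfl | ht
  · simp [mobiusSmul]
  have hnorm : ‖tanh t • u‖ = tanh |t| := by rw [norm_smul, hu, mul_one, norm_eq_abs, abs_tanh]
  have hpos : 0 < tanh |t| := by
    rw [← abs_tanh]
    exact abs_pos.mpr (fun h => ht (Real.tanh_injective (h.trans tanh_zero.symm)))
  have hne : tanh t • u ≠ 0 := norm_pos_iff.mp (hnorm ▸ hpos)
  rw [mobiusSmul, if_neg hne, hnorm, artanh_tanh_abs, smul_smul]
  congr 1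
  have hsign : tanh t = tanh |t| * (t / |t|) := by simpa using (tanh_abs_mul_mul_div_abs t 1).symm
  rw [hsign, mul_comm m |t|, mul_comm m t, ← tanh_abs_mul_mul_div_abs t m]
  field_simp

theorem toE_smul_mulVec {k n : ℕ} (m : ℝ) (M : Matrix (Fin k) (Fin n) ℝ) (x : Fin n → ℝ) :
    toE ((m • M) *ᵥ x) = m • toE (M *ᵥ x) := by
  rw [Matrix.smul_mulVec]
  rfl

theorem mobiusMat_eq_tanh_smul {k n : ℕ} {M : Matrix (Fin k) (Fin n) ℝ}
    {p : EuclideanSpace ℝ (Fin n)} (h : toE (M *ᵥ fromE p) ≠ 0) :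
    mobiusMat M p = tanh (‖toE (M *ᵥ fromE p)‖ / ‖p‖ * _root_.artanh ‖p‖) •
      ‖toE (M *ᵥ fromE p)‖⁻¹ • toE (M *ᵥ fromE p) := by
  rw [mobiusMat, if_neg h, smul_smul, div_eq_mul_inv (tanh _)]

theorem mobiusMat_smul_left {k n : ℕ} {m : ℝ} {M : Matrix (Fin k) (Fin n) ℝ}
    {p : EuclideanSpace ℝ (Fin n)} (hm : m ≠ 0) (h : toE (M *ᵥ fromE p) ≠ 0) :
    mobiusMat (m • M) p = tanh (m * (‖toE (M *ᵥ fromE p)‖ / ‖p‖ * _root_.artanh ‖p‖)) •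
      ‖toE (M *ᵥ fromE p)‖⁻¹ • toE (M *ᵥ fromE p) := by
  have hmM : toE ((m • M) *ᵥ fromE p) = m • toE (M *ᵥ fromE p) := toE_smul_mulVec m M (fromE p)
  rw [mobiusMat_eq_tanh_smul (hmM ▸ smul_ne_zero hm h), hmM, norm_smul, norm_eq_abs, smul_smul,
    smul_smul, smul_smul]
  congr 1
  rw [← tanh_abs_mul_mul_div_abs m, mul_div_assoc, mul_assoc |m|]
  field_simp

theorem mobiusMat_smul_general {k n : ℕ} (m : ℝ) (N : Matrix (Fin k) (Fin n) ℝ)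
    (p : EuclideanSpace ℝ (Fin n))
    (hN : toE (N.mulVec (fromE p)) ≠ 0) (hm : m ≠ 0) :
    mobiusMat (m • N) p = mobiusSmul m (mobiusMat N p) := by
  have hunit : ‖‖toE (N *ᵥ fromE p)‖⁻¹ • toE (N *ᵥ fromE p)‖ = 1 := by simp [norm_smul, hN]
  rw [mobiusMat_smul_left hm hN, mobiusMat_eq_tanh_smul hN, mobiusSmul_tanh_smul m _ hunit]

theorem mobiusMat_smul {k n : ℕ} (m : ℝ) (N : Matrix (Fin k) (Fin n) ℝ)
    (p : EuclideanSpace ℝ (Fin n)) (hp : ‖p‖ < 1)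
    (hN : toE (N.mulVec (fromE p)) ≠ 0) (hm : m ≠ 0) :
    mobiusMat (m • N) p = mobiusSmul m (mobiusMat N p) :=
  mobiusMat_smul_general m N p hN hm
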